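/- Let S be a finite regular involutory semigroup (i.e., for every x ∈ S there is y ∈ S with x = x·y·x) satisfying, for some positive integer N, the identity x^N = (x^N·(x^N)*)^N·x^N for all x ∈ S. Then there exists a positive integer n such that x = (x·x*)^n·x for all x ∈ S. -/
import Mathlib

/-- `spow x N` is the `N`-th power of `x` in a semigroup, for `N ≥ 1`. -/
def spow {S : Type*} [Semigroup S] (x : S) : ℕ → S
  | 0 => x
  | 1 => x
  | (n + 2) => spow x (n + 1) * x

section Aux

variable {S : Type*} [Semigroup S]

lemma spow_one' (x : S) : spow x 1 = x := rfl

lemma spow_add_two (x : S) (n : ℕ) : spow x (n + 2) = spow x (n + 1) * x := rfl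

lemma spow_succ_of_pos (x : S) : ∀ {n : ℕ}, 1 ≤ n → spow x (n + 1) = spow x n * x
  | (_ + 1), _ => rfl

lemma spow_succ_left (x : S) (n : ℕ) : spow x (n + 2) = x * spow x (n + 1) := by
  induction n with
  | zero => rfl
  | succ n ih =>
    calc spow x (n + 3) = spow x (n + 2) * x := rfl
      _ = (x * spow x (n + 1)) * x := by rw [ih]
      _ = x * (spow x (n + 1) * x) := mul_assoc _ _ _
      _ = x * spow x (n + 2) := rfl

lemma spow_add (x : S) {m n : ℕ} (hm : 1 ≤ m) (hn : 1 ≤ n) :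
    spow x (m + n) = spow x m * spow x n := by
  induction n, hn using Nat.le_induction with
  | base => rw [spow_one', spow_succ_of_pos x hm]
  | succ n hn ih =>
    show spow x (m + n + 1) = spow x m * spow x (n + 1)
    calc spow x (m + n + 1) = spow x (m + n) * x := spow_succ_of_pos x (by omega)
      _ = (spow x m * spow x n) * x := by rw [ih]
      _ = spow x m * (spow x n * x) := mul_assoc _ _ _
      _ = spow x m * spow x (n + 1) := by rw [← spow_succ_of_pos x hn]

lemma spow_mul (x : S) {m k : ℕ} (hm : 1 ≤ m) (hk : 1 ≤ k) :
    spow x (m * k) = spow (spow x m) k := by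
  induction k, hk using Nat.le_induction with
  | base => rw [mul_one, spow_one']
  | succ k hk ih =>
    have h1 : m * (k + 1) = m * k + m := by ring
    have hmk : 1 ≤ m * k := Nat.mul_pos hm hk
    rw [h1, spow_add x hmk hm, ih, ← spow_succ_of_pos _ hk]

lemma idem_spow {f : S} (h : f * f = f) : ∀ n, spow f n = f
  | 0 => rfl
  | 1 => rfl
  | (n + 2) => by
    rw [spow_add_two, idem_spow h (n + 1), h]

lemma spow_conj (p q : S) (n : ℕ) :
    spow (p * q) (n + 1) * p = p * spow (q * p) (n + 1) := by
  induction n with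
  | zero => exact mul_assoc _ _ _
  | succ n ih =>
    calc spow (p * q) (n + 2) * p = (spow (p * q) (n + 1) * (p * q)) * p := rfl
      _ = spow (p * q) (n + 1) * ((p * q) * p) := mul_assoc _ _ _
      _ = spow (p * q) (n + 1) * (p * (q * p)) := by rw [mul_assoc p q p]
      _ = (spow (p * q) (n + 1) * p) * (q * p) := (mul_assoc _ _ _).symm
      _ = (p * spow (q * p) (n + 1)) * (q * p) := by rw [ih]
      _ = p * (spow (q * p) (n + 1) * (q * p)) := mul_assoc _ _ _
      _ = p * spow (q * p) (n + 2) := rfl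

lemma spow_ends (c b : S) (n : ℕ) : ∃ m : S, spow (c * b) (n + 1) = m * b := by
  induction n with
  | zero => exact ⟨c, rfl⟩
  | succ n ih =>
    obtain ⟨m, hm⟩ := ih
    refine ⟨m * b * c, ?_⟩
    calc spow (c * b) (n + 2) = spow (c * b) (n + 1) * (c * b) := rfl
      _ = (m * b) * (c * b) := by rw [hm]
      _ = ((m * b) * c) * b := (mul_assoc _ _ _).symm

lemma exists_spow_idem [Finite S] (z : S) :
    ∃ m, 1 ≤ m ∧ spow z m * spow z m = spow z m := by
  obtain ⟨a, b, hab, heq⟩ := Finite.exists_ne_map_eq_of_infinite (fun n : ℕ => spow z (n + 1))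
  wlog hlt : a < b generalizing a b
  · exact this b a hab.symm heq.symm (by omega)
  have hper : ∀ d, spow z (a + 1 + d) = spow z (b + 1 + d) := by
    intro d
    induction d with
    | zero => exact heq
    | succ d ih =>
      calc spow z (a + 1 + d + 1) = spow z (a + 1 + d) * z := spow_succ_of_pos z (by omega)
        _ = spow z (b + 1 + d) * z := by rw [ih]
        _ = spow z (b + 1 + d + 1) := (spow_succ_of_pos z (by omega)).symm
  have hp : ∀ d, spow z (a + 1 + d) = spow z (a + 1 + d + (b - a)) := by
    intro d
    have h : a + 1 + d + (b - a) = b + 1 + d := by omega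
    rw [h]; exact hper d
  have hiter : ∀ k d, spow z (a + 1 + d) = spow z (a + 1 + d + k * (b - a)) := by
    intro k
    induction k with
    | zero => simp
    | succ k ih =>
      intro d
      have harith : ∀ K Q : ℕ, a + 1 + d + (K + Q) = a + 1 + (d + Q) + K := by
        intro K Q; omega
      have h2 : a + 1 + d + (k + 1) * (b - a) = a + 1 + (d + (b - a)) + k * (b - a) := by
        rw [Nat.succ_mul]
        exact harith (k * (b - a)) (b - a)
      rw [h2, ← ih (d + (b - a))]
      have h4 : a + 1 + (d + (b - a)) = a + 1 + d + (b - a) := by omega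
      rw [h4]
      exact hp d
  set M := (a + 1) * (b - a) with hM
  have hM1 : 1 ≤ M := Nat.mul_pos (by omega) (by omega)
  have hle : a + 1 ≤ M := Nat.le_mul_of_pos_right _ (by omega)
  refine ⟨M, hM1, ?_⟩
  have h1 := hiter (a + 1) (M - (a + 1))
  have e1 : a + 1 + (M - (a + 1)) = M := by omega
  have e2 : M + (a + 1) * (b - a) = M + M := by rw [← hM]
  rw [e1, e2] at h1
  rw [← spow_add z hM1 hM1, ← h1]

lemma exists_uniform_spow_idem (S : Type*) [Semigroup S] [Finite S] :
    ∃ ω, 1 ≤ ω ∧ ∀ z : S, spow z ω * spow z ω = spow z ω := by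
  have h := fun z : S => exists_spow_idem z
  choose g hg1 hg2 using h
  letI := Fintype.ofFinite S
  have hone : (1 : ℕ) ≤ ∏ z : S, g z := Finset.one_le_prod' (fun z _ => hg1 z)
  refine ⟨∏ z : S, g z, hone, fun z => ?_⟩
  obtain ⟨k, hk⟩ := Finset.dvd_prod_of_mem g (Finset.mem_univ z)
  have hk1 : 1 ≤ k := by
    rcases Nat.eq_zero_or_pos k with h0 | h0
    · exfalso
      have hone2 := hone
      rw [hk, h0, mul_zero] at hone2
      omega
    · exact h0
  have heq : spow z (∏ z : S, g z) = spow z (g z) := by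
    rw [hk, spow_mul z (hg1 z) hk1, idem_spow (hg2 z) k]
  rw [heq]
  exact hg2 z

end Aux

/-- A finite regular involutory semigroup satisfying the identity
`x^N = (x^N (x^N)*)^N x^N` for some positive `N` satisfies
`x = (x x*)^n x` for some positive `n`. -/
theorem regular_typeB_identity {S : Type*} [Semigroup S] [StarMul S] [Finite S]
    (hreg : ∀ x : S, ∃ y : S, x = x * y * x)
    (N : ℕ) (hN : 0 < N)
    (hid : ∀ x : S, spow x N = spow (spow x N * star (spow x N)) N * spow x N) :
    ∃ n : ℕ, 0 < n ∧ ∀ x : S, x = spow (x * star x) n * x := by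
  obtain ⟨ω, hω1, hωidem⟩ := exists_uniform_spow_idem S
  obtain ⟨N', rfl⟩ : ∃ N', N = N' + 1 := ⟨N - 1, by omega⟩
  -- Lemma B : every z satisfies z = z * m * (z* z) for some m
  have lemB : ∀ z : S, ∃ m : S, z = z * m * (star z * z) := by
    intro z
    obtain ⟨y, hy⟩ := hreg z
    have hff : (z * y) * (z * y) = z * y := by
      calc (z * y) * (z * y) = ((z * y) * z) * y := (mul_assoc _ _ _).symm
        _ = z * y := by rw [← hy]
    have hfz : (z * y) * z = z := hy.symm
    set f := z * y with hf
    have hidf := hid f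
    rw [idem_spow hff (N' + 1)] at hidf
    -- hidf : f = spow (f * star f) (N' + 1) * f
    have hconj : f * star f = z * ((y * star y) * star z) := by
      rw [hf, star_mul]
      rw [mul_assoc z y (star y * star z), ← mul_assoc y (star y) (star z)]
    have h2 : spow (f * star f) (N' + 1) * z
        = z * spow ((y * star y) * (star z * z)) (N' + 1) := by
      rw [hconj, spow_conj z ((y * star y) * star z) N',
        mul_assoc (y * star y) (star z) z]
    have h3 : z = z * spow ((y * star y) * (star z * z)) (N' + 1) := by
      calc z = f * z := hfz.symm
        _ = (spow (f * star f) (N' + 1) * f) * z := by rw [← hidf]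
        _ = spow (f * star f) (N' + 1) * (f * z) := mul_assoc _ _ _
        _ = spow (f * star f) (N' + 1) * z := by rw [hfz]
        _ = z * spow ((y * star y) * (star z * z)) (N' + 1) := h2
    obtain ⟨m, hm⟩ := spow_ends (y * star y) (star z * z) N'
    rw [hm, ← mul_assoc] at h3
    exact ⟨m, h3⟩
  -- Lemma B' : every z satisfies z = (z z*) * m * z for some m
  have lemB' : ∀ z : S, ∃ m : S, z = z * star z * m * z := by
    intro z
    obtain ⟨m, hm⟩ := lemB (star z)
    have hc := congrArg star hm
    simp only [star_mul, star_star] at hc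
    -- hc : z = (z * star z) * (star m * z)   (up to association)
    refine ⟨star m, ?_⟩
    rw [← mul_assoc] at hc
    exact hc
  refine ⟨ω, hω1, fun x => ?_⟩
  set a := x * star x with ha
  have hstar_a : star a = a := by rw [ha, star_mul, star_star]
  obtain ⟨m₁, hx⟩ := lemB' x
  -- hx : x = a * m₁ * x
  obtain ⟨m₂, haa⟩ := lemB' a
  rw [hstar_a] at haa
  -- haa : a = a * a * m₂ * a
  set s := m₂ * a with hs
  have haa2 : a = (a * a) * s := by
    rw [hs, ← mul_assoc]; exact haa
  have key : ∀ k, a = spow a (k + 2) * spow s (k + 1) := by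
    intro k
    induction k with
    | zero =>
      show a = spow a 2 * spow s 1
      exact haa2
    | succ k ih =>
      show a = spow a (k + 3) * spow s (k + 2)
      have hsl : spow a (k + 3) = a * spow a (k + 2) := spow_succ_left a (k + 1)
      have hs2 : spow s (k + 2) = spow s (k + 1) * s := rfl
      calc a = (a * a) * s := haa2
        _ = (a * (spow a (k + 2) * spow s (k + 1))) * s := by rw [← ih]
        _ = ((a * spow a (k + 2)) * spow s (k + 1)) * s := by
            rw [mul_assoc a (spow a (k + 2)) (spow s (k + 1))]
        _ = (a * spow a (k + 2)) * (spow s (k + 1) * s) := mul_assoc _ _ _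
        _ = spow a (k + 3) * spow s (k + 2) := by rw [hsl, hs2]
  obtain ⟨ω', rfl⟩ : ∃ w, ω = w + 1 := ⟨ω - 1, by omega⟩
  have hkey := key ω'
  set e := spow a (ω' + 1) with he
  have he2 : spow a (ω' + 2) = e * a := rfl
  rw [he2] at hkey
  -- hkey : a = (e * a) * spow s (ω' + 1)
  have hee : e * e = e := hωidem a
  have hea : e * a = a := by
    calc e * a = e * ((e * a) * spow s (ω' + 1)) := by rw [← hkey]
      _ = (e * (e * a)) * spow s (ω' + 1) := (mul_assoc _ _ _).symm
      _ = ((e * e) * a) * spow s (ω' + 1) := by rw [mul_assoc e e a]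
      _ = (e * a) * spow s (ω' + 1) := by rw [hee]
      _ = a := hkey.symm
  have hxa : x = a * (m₁ * x) := by
    rw [← mul_assoc]; exact hx
  calc x = a * (m₁ * x) := hxa
    _ = (e * a) * (m₁ * x) := by rw [hea]
    _ = e * (a * (m₁ * x)) := mul_assoc _ _ _
    _ = e * x := by rw [← hxa]
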